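/- For any alternating 3-form T on an n-dimensional real inner product space with orthonormal basis e_1,...,e_n, define the 4-form σ^T by σ^T(X,Y,Z,V) = (1/2) Σ_j ((e_j ⌟ T) ∧ (e_j ⌟ T))(X,Y,Z,V), where (e_j ⌟ T)(X,Y) = T(e_j,X,Y). Then the full contraction T_{abc} σ^T_{abci} = Σ_{a,b,c} T(e_a,e_b,e_c) σ^T(e_a,e_b,e_c,e_i) vanishes for every i. -/

import Mathlib

noncomputable section

/-- The 4-form `σ^T(X,Y,Z,V) = (1/2) Σ_j ((e_j ⌟ T) ∧ (e_j ⌟ T))(X,Y,Z,V)`,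
written in components with respect to the orthonormal basis `e_1, …, e_n`. -/
def sigmaT (n : ℕ) (T : Fin n → Fin n → Fin n → ℝ) (X Y Z V : Fin n) : ℝ :=
  (1/2 : ℝ) * ∑ j, (T j X Y * T j Z V - T j X Z * T j Y V + T j X V * T j Y Z
    + T j Y Z * T j X V - T j Y V * T j X Z + T j Z V * T j X Y)

/-!
For alternating `T`, the components of `σ^T` are `u a b c + u b c a + u c a b` with
`u a b c = ∑ s, T a b s * T s c i`. Since `T a b c` is invariant under cyclic permutations, the
contraction is `3 * ∑ a, ∑ b, ∑ c, ∑ s, T a b c * T a b s * T s c i`; for fixed `a, b` the inner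
double sum is the quadratic form of the antisymmetric matrix `(T s c i)_{s,c}` at the vector
`T a b ·`, hence zero.
-/

open Finset

section Sums

variable {ι R : Type*} [Fintype ι]

theorem sum_sum_sum_rotate [AddCommMonoid R] (h : ι → ι → ι → R) :
    ∑ a, ∑ b, ∑ c, h b c a = ∑ a, ∑ b, ∑ c, h a b c := by
  rw [sum_comm]
  exact sum_congr rfl fun _ _ => sum_comm

theorem sum_mul_add_rotations_eq [CommSemiring R] {f : ι → ι → ι → R}
    (hf : ∀ a b c, f b c a = f a b c) (u : ι → ι → ι → R) :
    ∑ a, ∑ b, ∑ c, f a b c * (u a b c + u b c a + u c a b) =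
      3 * ∑ a, ∑ b, ∑ c, f a b c * u a b c := by
  have rotate (g : ι → ι → ι → R) :
      ∑ a, ∑ b, ∑ c, f a b c * g b c a = ∑ a, ∑ b, ∑ c, f a b c * g a b c :=
    calc ∑ a, ∑ b, ∑ c, f a b c * g b c a = ∑ a, ∑ b, ∑ c, f b c a * g b c a :=
          sum_congr rfl fun a _ => sum_congr rfl fun b _ => sum_congr rfl fun c _ => by
            rw [← hf a b c]
      _ = ∑ a, ∑ b, ∑ c, f a b c * g a b c :=
          sum_sum_sum_rotate fun a b c => f a b c * g a b c
  have rotate_twice :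
      ∑ a, ∑ b, ∑ c, f a b c * u c a b = ∑ a, ∑ b, ∑ c, f a b c * u a b c :=
    (rotate fun a b c => u b c a).trans (rotate u)
  simp only [mul_add, sum_add_distrib]
  rw [rotate u, rotate_twice]
  ring

theorem sum_mul_sum_mul_eq_zero_of_antisymm [CommRing R] [NoZeroDivisors R] [CharZero R]
    (v : ι → R) {g : ι → ι → R} (hg : ∀ i j, g i j = -g j i) :
    ∑ i, v i * ∑ j, v j * g j i = 0 := by
  rw [← self_eq_neg]
  calc ∑ i, v i * ∑ j, v j * g j i = ∑ i, ∑ j, v j * (v i * g i j) := by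
        simp only [mul_sum]
        exact sum_comm
    _ = -∑ i, v i * ∑ j, v j * g j i := by
        simp only [mul_sum, ← sum_neg_distrib]
        exact sum_congr rfl fun i _ => sum_congr rfl fun j _ => by rw [hg]; ring

end Sums

section Alternating

variable {n : ℕ} {T : Fin n → Fin n → Fin n → ℝ}

theorem rotate_eq_of_alternating (hT1 : ∀ a b c, T a b c = - T b a c)
    (hT2 : ∀ a b c, T a b c = - T a c b) (a b c : Fin n) : T b c a = T a b c := by
  rw [hT1 b c a, hT2 c b a, hT1 c a b, neg_neg, hT2 a b c]

theorem sigmaT_eq_sum_add_sum_add_sum (hT1 : ∀ a b c, T a b c = - T b a c)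
    (hT2 : ∀ a b c, T a b c = - T a c b) (a b c i : Fin n) :
    sigmaT n T a b c i = (∑ s, T a b s * T s c i) + (∑ s, T b c s * T s a i)
      + (∑ s, T c a s * T s b i) := by
  have hrot := rotate_eq_of_alternating hT1 hT2
  simp only [sigmaT, ← sum_add_distrib, mul_sum]
  refine sum_congr rfl fun s _ => ?_
  rw [hrot s a b, hrot s b c, hT2 s a c, hrot s c a]
  ring

end Alternating

/-- For any alternating 3-form `T`, the full contraction `T_{abc} σ^T_{abci}`
vanishes for every `i`. -/
theorem contraction_T_sigmaT_eq_zero (n : ℕ) (T : Fin n → Fin n → Fin n → ℝ)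
    (hT1 : ∀ a b c, T a b c = - T b a c) (hT2 : ∀ a b c, T a b c = - T a c b) :
    ∀ i, (∑ a, ∑ b, ∑ c, T a b c * sigmaT n T a b c i) = 0 := by
  intro i
  simp only [sigmaT_eq_sum_add_sum_add_sum hT1 hT2]
  refine (sum_mul_add_rotations_eq (rotate_eq_of_alternating hT1 hT2)
    fun a b c => ∑ s, T a b s * T s c i).trans ?_
  rw [mul_eq_zero]
  exact Or.inr <| sum_eq_zero fun a _ => sum_eq_zero fun b _ =>
    sum_mul_sum_mul_eq_zero_of_antisymm (T a b) fun s c => hT1 s c i
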